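/- Let ε > 0 and ψ : [a,b] → ℂ continuous with ‖ψ‖_∞ ≤ ε². Suppose Z_a, W_a, Z_b, W_b ∈ ℂ satisfy Z_a W_a = ψ(a), Z_b W_b = ψ(b) and |Z_a|, |W_a|, |Z_b|, |W_b| ≤ ε. Then there exist continuous Z₁, Z₂ : [a,b] → ℂ with Z₁(a)=Z_a, Z₂(a)=W_a, Z₁(b)=Z_b, Z₂(b)=W_b, |Z₁(t)|,|Z₂(t)| ≤ ε and Z₁(t)Z₂(t) = ψ(t) for all t ∈ [a,b]. -/

import Mathlib

/-!
Assume first that `‖W‖ ≤ ‖Z‖` at both endpoints. Interpolate the modulus and the argument of `Z`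
linearly, take `Z₁ = ρ e^{iθ}` with `ρ = max (√‖ψ‖) ℓ`, where `ℓ` is the interpolated modulus,
and `Z₂ = ψ / Z₁`. Since `ρ ≥ √‖ψ‖` we get `‖Z₂‖ ≤ √‖ψ‖ ≤ ε`, which also makes `Z₂` continuous
at the zeros of `Z₁`; the ordering at the endpoints is exactly what makes `ρ` equal `‖Z‖` there.
Exchanging the roles of `Z₁` and `Z₂` handles the reverse ordering at both endpoints. In
general, split `[a, b]` at its midpoint `m` and prescribe the balanced factorisation
`ψ m = z * z` there: on each half one endpoint has equal moduli, so one of the two orderings holds.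
-/

open Set Complex Filter Topology

lemma exists_continuous_mapsTo_segment {E : Type*} [NormedAddCommGroup E] [NormedSpace ℝ E]
    {a b : ℝ} (hab : a < b) (x y : E) :
    ∃ f : ℝ → E, Continuous f ∧ f a = x ∧ f b = y ∧ MapsTo f (Icc a b) (segment ℝ x y) := by
  have hba : b - a ≠ 0 := (sub_pos.2 hab).ne'
  refine ⟨fun t => AffineMap.lineMap x y ((t - a) / (b - a)),
    AffineMap.lineMap_continuous.comp (by fun_prop), by simp, by simp [div_self hba], ?_⟩
  intro t ht
  rw [segment_eq_image_lineMap]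
  refine ⟨_, ⟨div_nonneg (sub_nonneg.2 ht.1) (sub_pos.2 hab).le, ?_⟩, rfl⟩
  exact (div_le_one (sub_pos.2 hab)).2 (sub_le_sub_right ht.2 a)

lemma continuousOn_Icc_if_le {β : Type*} [TopologicalSpace β] {f g : ℝ → β} {a m b : ℝ}
    (ham : a ≤ m) (hmb : m ≤ b) (hf : ContinuousOn f (Icc a m)) (hg : ContinuousOn g (Icc m b))
    (hfg : f m = g m) : ContinuousOn (fun t => if t ≤ m then f t else g t) (Icc a b) := by
  rw [← Icc_union_Icc_eq_Icc ham hmb]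
  refine ContinuousOn.union_of_isClosed ?_ ?_ isClosed_Icc isClosed_Icc
  · exact hf.congr fun t ht => if_pos ht.2
  · refine hg.congr fun t ht => ?_
    by_cases htm : t ≤ m
    · rw [if_pos htm, le_antisymm htm ht.1, hfg]
    · exact if_neg htm

section NormedField

variable {𝕜 : Type*} [NormedField 𝕜] {x y : 𝕜}

lemma eq_zero_of_norm_le_sq (h : ‖x‖ ≤ ‖y‖ ^ 2) (hy : y = 0) : x = 0 :=
  norm_le_zero_iff.1 (by simpa [hy] using h)

lemma mul_div_cancel_of_norm_le_sq (h : ‖x‖ ≤ ‖y‖ ^ 2) : y * (x / y) = x := by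
  rcases eq_or_ne y 0 with hy | hy
  · simp [hy, eq_zero_of_norm_le_sq h hy]
  · exact mul_div_cancel₀ x hy

lemma norm_div_le_sqrt_norm (h : ‖x‖ ≤ ‖y‖ ^ 2) : ‖x / y‖ ≤ √‖x‖ := by
  rcases eq_or_ne y 0 with hy | hy
  · simp [hy]
  have hsqrt : √‖x‖ ≤ ‖y‖ := (Real.sqrt_le_left (norm_nonneg y)).2 h
  rw [norm_div, div_le_iff₀ (norm_pos_iff.2 hy)]
  calc ‖x‖ = √‖x‖ * √‖x‖ := (Real.mul_self_sqrt (norm_nonneg x)).symm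
    _ ≤ √‖x‖ * ‖y‖ := mul_le_mul_of_nonneg_left hsqrt (Real.sqrt_nonneg _)

lemma sqrt_norm_mul_le (h : ‖y‖ ≤ ‖x‖) : √‖x * y‖ ≤ ‖x‖ :=
  (Real.sqrt_le_left (norm_nonneg x)).2 <| by
    rw [norm_mul, sq]; exact mul_le_mul_of_nonneg_left h (norm_nonneg x)

lemma mul_div_cancel_left_of_norm_le (h : ‖y‖ ≤ ‖x‖) : x * y / x = y := by
  rcases eq_or_ne x 0 with hx | hx
  · simpa [hx, eq_comm] using h
  · exact mul_div_cancel_left₀ y hx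

end NormedField

/-- Where `g` vanishes the quotient takes the junk value `f x / 0 = 0`, which is the right
value because `f` vanishes there too and `‖f / g‖ ≤ √‖f‖`. -/
theorem ContinuousOn.div_of_norm_le_sq {α 𝕜 : Type*} [TopologicalSpace α] [NormedField 𝕜]
    {f g : α → 𝕜} {s : Set α} (hf : ContinuousOn f s) (hg : ContinuousOn g s)
    (h : ∀ x ∈ s, ‖f x‖ ≤ ‖g x‖ ^ 2) : ContinuousOn (fun x => f x / g x) s := by
  intro x hx
  rcases eq_or_ne (g x) 0 with hgx | hgx
  · have hfx : f x = 0 := eq_zero_of_norm_le_sq (h x hx) hgx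
    have hsqrt : Tendsto (fun y => √‖f y‖) (𝓝[s] x) (𝓝 0) := by
      simpa [hfx] using ((hf x hx).norm.sqrt : ContinuousWithinAt _ s x).tendsto
    rw [ContinuousWithinAt, hgx, hfx, zero_div]
    refine squeeze_zero_norm' ?_ hsqrt
    filter_upwards [self_mem_nhdsWithin] with y hy
    exact norm_div_le_sqrt_norm (h y hy)
  · exact (hf x hx).div (hg x hx) hgx

def IsBoundedFactorizationOn {α : Type*} [TopologicalSpace α] (s : Set α) (ε : ℝ)
    (ψ Z₁ Z₂ : α → ℂ) : Prop :=
  ContinuousOn Z₁ s ∧ ContinuousOn Z₂ s ∧ ∀ t ∈ s, ‖Z₁ t‖ ≤ ε ∧ ‖Z₂ t‖ ≤ ε ∧ Z₁ t * Z₂ t = ψ t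

namespace IsBoundedFactorizationOn

lemma swap {α : Type*} [TopologicalSpace α] {s : Set α} {ε : ℝ} {ψ Z₁ Z₂ : α → ℂ}
    (h : IsBoundedFactorizationOn s ε ψ Z₁ Z₂) : IsBoundedFactorizationOn s ε ψ Z₂ Z₁ := by
  obtain ⟨h₁, h₂, h⟩ := h
  exact ⟨h₂, h₁, fun t ht => ⟨(h t ht).2.1, (h t ht).1, mul_comm (Z₂ t) _ ▸ (h t ht).2.2⟩⟩

lemma glue {a m b ε : ℝ} {ψ F₁ F₂ G₁ G₂ : ℝ → ℂ} (ham : a ≤ m) (hmb : m ≤ b)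
    (hF : IsBoundedFactorizationOn (Icc a m) ε ψ F₁ F₂)
    (hG : IsBoundedFactorizationOn (Icc m b) ε ψ G₁ G₂) (h₁ : F₁ m = G₁ m) (h₂ : F₂ m = G₂ m) :
    IsBoundedFactorizationOn (Icc a b) ε ψ (fun t => if t ≤ m then F₁ t else G₁ t)
      (fun t => if t ≤ m then F₂ t else G₂ t) := by
  refine ⟨continuousOn_Icc_if_le ham hmb hF.1 hG.1 h₁,
    continuousOn_Icc_if_le ham hmb hF.2.1 hG.2.1 h₂, fun t ht => ?_⟩
  by_cases htm : t ≤ m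
  · simpa only [if_pos htm] using hF.2.2 t ⟨ht.1, htm⟩
  · simpa only [if_neg htm] using hG.2.2 t ⟨(not_le.1 htm).le, ht.2⟩

end IsBoundedFactorizationOn

section Interval

variable {a b ε : ℝ} {ψ : ℝ → ℂ} {Za Wa Zb Wb : ℂ}

theorem exists_boundedFactorization_of_norm_le_norm (hab : a < b)
    (hψc : ContinuousOn ψ (Icc a b)) (hψb : ∀ t ∈ Icc a b, ‖ψ t‖ ≤ ε ^ 2)
    (hfa : Za * Wa = ψ a) (hfb : Zb * Wb = ψ b) (hZa : ‖Za‖ ≤ ε) (hZb : ‖Zb‖ ≤ ε)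
    (hWZa : ‖Wa‖ ≤ ‖Za‖) (hWZb : ‖Wb‖ ≤ ‖Zb‖) :
    ∃ Z₁ Z₂ : ℝ → ℂ, IsBoundedFactorizationOn (Icc a b) ε ψ Z₁ Z₂ ∧
      Z₁ a = Za ∧ Z₂ a = Wa ∧ Z₁ b = Zb ∧ Z₂ b = Wb := by
  have hε : 0 ≤ ε := (norm_nonneg Za).trans hZa
  have hsqrtψ : ∀ t ∈ Icc a b, √‖ψ t‖ ≤ ε := fun t ht => (Real.sqrt_le_left hε).2 (hψb t ht)
  obtain ⟨ℓ, hℓc, hℓa, hℓb, hℓ⟩ := exists_continuous_mapsTo_segment hab ‖Za‖ ‖Zb‖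
  obtain ⟨θ, hθc, hθa, hθb, -⟩ := exists_continuous_mapsTo_segment hab Za.arg Zb.arg
  set ρ : ℝ → ℝ := fun t => max √‖ψ t‖ (ℓ t)
  set Z₁ : ℝ → ℂ := fun t => ρ t * exp (θ t * I)
  have hρ_nonneg : ∀ t, 0 ≤ ρ t := fun t => (Real.sqrt_nonneg _).trans (le_max_left _ _)
  have hZ₁_norm : ∀ t, ‖Z₁ t‖ = ρ t := fun t => by
    simp only [Z₁, norm_mul, norm_real, norm_exp_ofReal_mul_I, mul_one, Real.norm_eq_abs,
      abs_of_nonneg (hρ_nonneg t)]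
  have hψZ₁ : ∀ t, ‖ψ t‖ ≤ ‖Z₁ t‖ ^ 2 := fun t => by
    rw [hZ₁_norm, ← Real.sqrt_le_left (hρ_nonneg t)]
    exact le_max_left _ _
  have hZ₁c : ContinuousOn Z₁ (Icc a b) := by
    have hρc : ContinuousOn ρ (Icc a b) := (hψc.norm.sqrt).sup hℓc.continuousOn
    exact (continuous_ofReal.comp_continuousOn hρc).mul (by fun_prop)
  have hZ₁_eq : ∀ t Z W, Z * W = ψ t → ‖W‖ ≤ ‖Z‖ → ℓ t = ‖Z‖ → θ t = Z.arg → Z₁ t = Z := by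
    intro t Z W hψ hWZ hℓ hθ
    have hρ : ρ t = ‖Z‖ := by
      simp only [ρ, hℓ, ← hψ]
      exact max_eq_right (sqrt_norm_mul_le hWZ)
    simp only [Z₁, hρ, hθ, norm_mul_exp_arg_mul_I]
  have hZ₁a := hZ₁_eq a Za Wa hfa hWZa hℓa hθa
  have hZ₁b := hZ₁_eq b Zb Wb hfb hWZb hℓb hθb
  refine ⟨Z₁, fun t => ψ t / Z₁ t,
    ⟨hZ₁c, hψc.div_of_norm_le_sq hZ₁c fun t _ => hψZ₁ t, fun t ht => ⟨?_, ?_, ?_⟩⟩,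
    hZ₁a, ?_, hZ₁b, ?_⟩
  · have hℓε : ℓ t ≤ ε := (convex_Iic ε).segment_subset hZa hZb (hℓ ht)
    exact (hZ₁_norm t).trans_le (max_le (hsqrtψ t ht) hℓε)
  · exact (norm_div_le_sqrt_norm (hψZ₁ t)).trans (hsqrtψ t ht)
  · exact mul_div_cancel_of_norm_le_sq (hψZ₁ t)
  · simp only [hZ₁a, ← hfa, mul_div_cancel_left_of_norm_le hWZa]
  · simp only [hZ₁b, ← hfb, mul_div_cancel_left_of_norm_le hWZb]

theorem exists_boundedFactorization_of_norm_le_or_le (hab : a < b)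
    (hψc : ContinuousOn ψ (Icc a b)) (hψb : ∀ t ∈ Icc a b, ‖ψ t‖ ≤ ε ^ 2)
    (hfa : Za * Wa = ψ a) (hfb : Zb * Wb = ψ b) (hZa : ‖Za‖ ≤ ε) (hWa : ‖Wa‖ ≤ ε)
    (hZb : ‖Zb‖ ≤ ε) (hWb : ‖Wb‖ ≤ ε)
    (hord : ‖Wa‖ ≤ ‖Za‖ ∧ ‖Wb‖ ≤ ‖Zb‖ ∨ ‖Za‖ ≤ ‖Wa‖ ∧ ‖Zb‖ ≤ ‖Wb‖) :
    ∃ Z₁ Z₂ : ℝ → ℂ, IsBoundedFactorizationOn (Icc a b) ε ψ Z₁ Z₂ ∧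
      Z₁ a = Za ∧ Z₂ a = Wa ∧ Z₁ b = Zb ∧ Z₂ b = Wb := by
  rcases hord with ⟨hWZa, hWZb⟩ | ⟨hZWa, hZWb⟩
  · exact exists_boundedFactorization_of_norm_le_norm hab hψc hψb hfa hfb hZa hZb hWZa hWZb
  · obtain ⟨Z₂, Z₁, h, h₂a, h₁a, h₂b, h₁b⟩ := exists_boundedFactorization_of_norm_le_norm hab hψc
      hψb ((mul_comm Wa Za).trans hfa) ((mul_comm Wb Zb).trans hfb) hWa hWb hZWa hZWb
    exact ⟨Z₁, Z₂, h.swap, h₁a, h₂a, h₁b, h₂b⟩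

end Interval

theorem stmt_7_general (a b : ℝ) (hab : a < b) (ε : ℝ) (ψ : ℝ → ℂ)
    (hψc : ContinuousOn ψ (Set.Icc a b))
    (hψb : ∀ t ∈ Set.Icc a b, ‖ψ t‖ ≤ ε ^ 2)
    (Za Wa Zb Wb : ℂ)
    (hfa : Za * Wa = ψ a) (hfb : Zb * Wb = ψ b)
    (hZa : ‖Za‖ ≤ ε) (hWa : ‖Wa‖ ≤ ε)
    (hZb : ‖Zb‖ ≤ ε) (hWb : ‖Wb‖ ≤ ε) :
    ∃ Z₁ Z₂ : ℝ → ℂ, ContinuousOn Z₁ (Set.Icc a b) ∧ ContinuousOn Z₂ (Set.Icc a b) ∧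
      Z₁ a = Za ∧ Z₂ a = Wa ∧ Z₁ b = Zb ∧ Z₂ b = Wb ∧
      (∀ t ∈ Set.Icc a b, ‖Z₁ t‖ ≤ ε ∧ ‖Z₂ t‖ ≤ ε ∧
        Z₁ t * Z₂ t = ψ t) := by
  set m := (a + b) / 2 with hm
  have ham : a < m := by rw [hm]; linarith
  have hmb : m < b := by rw [hm]; linarith
  have hsub₁ : Icc a m ⊆ Icc a b := Icc_subset_Icc_right hmb.le
  have hsub₂ : Icc m b ⊆ Icc a b := Icc_subset_Icc_left ham.le
  obtain ⟨z, hz⟩ := IsAlgClosed.exists_eq_mul_self (ψ m)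
  have hzε : ‖z‖ ≤ ε := by
    have hε : 0 ≤ ε := (norm_nonneg Za).trans hZa
    rw [← pow_le_pow_iff_left₀ (norm_nonneg z) hε two_ne_zero, ← norm_pow, sq, ← hz]
    exact hψb m ⟨ham.le, hmb.le⟩
  obtain ⟨F₁, F₂, hF, hF₁a, hF₂a, hF₁m, hF₂m⟩ := exists_boundedFactorization_of_norm_le_or_le ham
    (hψc.mono hsub₁) (fun t ht => hψb t (hsub₁ ht)) hfa hz.symm hZa hWa hzε hzε
    ((le_total _ _).imp (⟨·, le_rfl⟩) (⟨·, le_rfl⟩))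
  obtain ⟨G₁, G₂, hG, hG₁m, hG₂m, hG₁b, hG₂b⟩ := exists_boundedFactorization_of_norm_le_or_le hmb
    (hψc.mono hsub₂) (fun t ht => hψb t (hsub₂ ht)) hz.symm hfb hzε hzε hZb hWb
    ((le_total _ _).imp (⟨le_rfl, ·⟩) (⟨le_rfl, ·⟩))
  obtain ⟨h₁, h₂, h⟩ := hF.glue ham.le hmb.le hG (hF₁m.trans hG₁m.symm) (hF₂m.trans hG₂m.symm)
  exact ⟨_, _, h₁, h₂, (if_pos ham.le).trans hF₁a, (if_pos ham.le).trans hF₂a,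
    (if_neg hmb.not_ge).trans hG₁b, (if_neg hmb.not_ge).trans hG₂b, h⟩

/-- Factorisation with prescribed data at both endpoints: if `Z_a W_a = ψ(a)`,
`Z_b W_b = ψ(b)`, all of modulus at most `ε`, and `‖ψ‖_∞ ≤ ε²`, then there is a continuous
factorisation `Z₁ Z₂ = ψ` with the prescribed endpoint values and bounded by `ε`. -/
theorem stmt_7 (a b : ℝ) (hab : a < b) (ε : ℝ) (hε : 0 < ε) (ψ : ℝ → ℂ)
    (hψc : ContinuousOn ψ (Set.Icc a b))
    (hψb : ∀ t ∈ Set.Icc a b, ‖ψ t‖ ≤ ε ^ 2)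
    (Za Wa Zb Wb : ℂ)
    (hfa : Za * Wa = ψ a) (hfb : Zb * Wb = ψ b)
    (hZa : ‖Za‖ ≤ ε) (hWa : ‖Wa‖ ≤ ε)
    (hZb : ‖Zb‖ ≤ ε) (hWb : ‖Wb‖ ≤ ε) :
    ∃ Z₁ Z₂ : ℝ → ℂ, ContinuousOn Z₁ (Set.Icc a b) ∧ ContinuousOn Z₂ (Set.Icc a b) ∧
      Z₁ a = Za ∧ Z₂ a = Wa ∧ Z₁ b = Zb ∧ Z₂ b = Wb ∧
      (∀ t ∈ Set.Icc a b, ‖Z₁ t‖ ≤ ε ∧ ‖Z₂ t‖ ≤ ε ∧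
        Z₁ t * Z₂ t = ψ t) :=
  stmt_7_general a b hab ε ψ hψc hψb Za Wa Zb Wb hfa hfb hZa hWa hZb hWb
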